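/- Efficiency optimality of the adaptive-smoothing influence function among unbiased AIPW scores: under homoscedasticity, for every measurable D:𝒳→[0,1] with V(D)=V₀ (equivalently, D=1 a.e. on {τ(X)>0} and D=0 a.e. on {τ(X)<0}), one has Var(ψ(D, π₁, (μ₁,μ₀))) ≥ Var(ψ(D_ad, π₁, (μ₁,μ₀))), where D_ad := 1{τ>0} + π₁·1{τ=0}. Hence the infimum of Var(ψ(D, π₁, (μ₁,μ₀))) over all such D equals Var(d₀(X)·μ₁(X)+(1−d₀(X))·μ₀(X)) + E[σ²(X)·(1{τ(X)>0}/π₁(X) + 1{τ(X)<0}/(1−π₁(X)))] + E[σ²(X)·1{τ(X)=0}] and is attained at D = D_ad. -/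

import Mathlib

/-!
Write `ψ(D) = U ε₁ + V ε₀ + h_D(X)` with `U = D/π₁`, `V = (1 - D)/(1 - π₁)`,
`ε₁ = A (Y - μ₁(X))`, `ε₀ = (1 - A) (Y - μ₀(X))` and `h_D = D μ₁ + (1 - D) μ₀`. The residuals
have conditional mean zero given `X`, conditional second moments `σ₁² π₁` and `σ₀² (1 - π₁)`, and
`ε₁ ε₀ = 0`; hence `Var ψ(D) = E[σ₁² D²/π₁ + σ₀² (1 - D)²/(1 - π₁)] + Var h_D(X)`.
If `V(D) = V₀` then `h_D(X) = max(μ₁, μ₀)(X)` a.s., so the second term does not depend on `D`, and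
`D(X)` is forced to be `1` on `{τ > 0}` and `0` on `{τ < 0}`. On `{τ = 0}` the first integrand is
`σ² (d²/π₁ + (1 - d)²/(1 - π₁)) = σ² + σ² (d - π₁)² / (π₁ (1 - π₁))`, minimal at `d = π₁`.
-/

open MeasureTheory ProbabilityTheory Filter Topology
open scoped Classical

/-- AIPW score `ψ(D, p, (m₁, m₀))` evaluated at a sample point `ω`. -/
noncomputable def aipw {Ω 𝒳 : Type*} (X : Ω → 𝒳) (A Y : Ω → ℝ)
    (D p m₁ m₀ : 𝒳 → ℝ) (ω : Ω) : ℝ :=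
  (A ω * D (X ω) + (1 - A ω) * (1 - D (X ω))) /
      (A ω * p (X ω) + (1 - A ω) * (1 - p (X ω))) *
    (Y ω - (A ω * m₁ (X ω) + (1 - A ω) * m₀ (X ω)))
  + D (X ω) * m₁ (X ω) + (1 - D (X ω)) * m₀ (X ω)

open scoped ENNReal

section CondExp

variable {Ω : Type*} {m mΩ : MeasurableSpace Ω} {P : Measure Ω}

theorem integral_mul_eq_integral_mul_condExp [IsFiniteMeasure P] (hm : m ≤ mΩ) {g f : Ω → ℝ}
    (hg : StronglyMeasurable[m] g) (hgf : Integrable (fun ω => g ω * f ω) P)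
    (hf : Integrable f P) :
    ∫ ω, g ω * f ω ∂P = ∫ ω, g ω * P[f | m] ω ∂P := by
  rw [← integral_condExp hm]
  exact integral_congr_ae (condExp_mul_of_stronglyMeasurable_left hg hgf hf)

theorem condExp_mul_eq_zero {U e : Ω → ℝ} (hU : StronglyMeasurable[m] U)
    (hUe : Integrable (fun ω => U ω * e ω) P) (he : Integrable e P) (he0 : P[e | m] =ᵐ[P] 0) :
    P[fun ω => U ω * e ω | m] =ᵐ[P] 0 := by
  refine (condExp_mul_of_stronglyMeasurable_left hU hUe he).trans ?_
  filter_upwards [he0] with ω h0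
  simp [h0]

theorem variance_add_of_condExp_eq_zero [IsProbabilityMeasure P] (hm : m ≤ mΩ) {R H : Ω → ℝ}
    (hR : MemLp R 2 P) (hH : MemLp H 2 P) (hHm : StronglyMeasurable[m] H)
    (hR0 : P[R | m] =ᵐ[P] 0) :
    Var[fun ω => R ω + H ω; P] = ∫ ω, R ω ^ 2 ∂P + Var[H; P] := by
  have hmean : ∫ ω, R ω ∂P = 0 := by
    rw [← integral_condExp hm]
    exact integral_eq_zero_of_ae hR0
  have hcross : ∫ ω, H ω * R ω ∂P = 0 := by
    rw [integral_mul_eq_integral_mul_condExp hm hHm (hH.integrable_mul hR)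
      (hR.integrable one_le_two)]
    exact integral_eq_zero_of_ae (hR0.mono fun ω h => by simp [h])
  have hcov : cov[R, H; P] = 0 := by
    rw [covariance_eq_sub hR hH, hmean, zero_mul, sub_zero]
    simpa [mul_comm] using hcross
  rw [variance_fun_add hR hH, hcov, variance_of_integral_eq_zero hR.aemeasurable hmean]
  ring

theorem condExp_one_sub [IsFiniteMeasure P] (hm : m ≤ mΩ) {A p : Ω → ℝ} (hA : Integrable A P)
    (hAp : P[A | m] =ᵐ[P] p) :
    P[fun ω => 1 - A ω | m] =ᵐ[P] fun ω => 1 - p ω := by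
  have hsub : P[fun ω => 1 - A ω | m] =ᵐ[P] fun ω => P[fun _ => (1 : ℝ) | m] ω - P[A | m] ω :=
    condExp_sub (integrable_const 1) hA m
  filter_upwards [hsub, hAp] with ω h h'
  rw [h, h', condExp_const hm]

end CondExp

section Residual

variable {Ω : Type*} {m mΩ : MeasurableSpace Ω} {P : Measure Ω} [IsFiniteMeasure P]
  {B Y M p S : Ω → ℝ}

theorem condExp_mul_sub_eq_zero (hB : MemLp B ∞ P) (hY : Integrable Y P)
    (hM : StronglyMeasurable[m] M) (hMi : Integrable M P) (hBp : P[B | m] =ᵐ[P] p)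
    (hBY : P[fun ω => B ω * Y ω | m] =ᵐ[P] fun ω => M ω * p ω) :
    P[fun ω => B ω * (Y ω - M ω) | m] =ᵐ[P] 0 := by
  have hBi : Integrable (fun ω => M ω * B ω) P := hMi.mul_of_top_left hB
  have hpull : P[fun ω => M ω * B ω | m] =ᵐ[P] fun ω => M ω * P[B | m] ω :=
    condExp_mul_of_stronglyMeasurable_left hM hBi (hB.integrable le_top)
  have hsplit : (fun ω => B ω * (Y ω - M ω)) = fun ω => B ω * Y ω - M ω * B ω := by
    ext ω; ring
  have hsub : P[fun ω => B ω * Y ω - M ω * B ω | m]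
      =ᵐ[P] fun ω => P[fun ω => B ω * Y ω | m] ω - P[fun ω => M ω * B ω | m] ω :=
    condExp_sub (hY.mul_of_top_right hB) hBi m
  rw [hsplit]
  filter_upwards [hsub, hBY, hpull, hBp] with ω h₀ h₁ h₂ h₃
  rw [h₀, h₁, h₂, h₃, Pi.zero_apply, sub_self]

theorem condExp_mul_sub_sq (hB : MemLp B ∞ P) (hB01 : ∀ ω, B ω = 0 ∨ B ω = 1)
    (hY : MemLp Y 2 P) (hM : StronglyMeasurable[m] M) (hML2 : MemLp M 2 P)
    (hBp : P[B | m] =ᵐ[P] p) (hBY : P[fun ω => B ω * Y ω | m] =ᵐ[P] fun ω => M ω * p ω)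
    (hBY2 : P[fun ω => B ω * Y ω ^ 2 | m] =ᵐ[P] fun ω => (M ω ^ 2 + S ω) * p ω) :
    P[fun ω => (B ω * (Y ω - M ω)) ^ 2 | m] =ᵐ[P] fun ω => S ω * p ω := by
  have hBYi : Integrable (fun ω => B ω * Y ω) P := (hY.integrable one_le_two).mul_of_top_right hB
  have hBY2i : Integrable (fun ω => B ω * Y ω ^ 2) P := hY.integrable_sq.mul_of_top_right hB
  have hMBYi : Integrable (fun ω => 2 * M ω * (B ω * Y ω)) P :=
    (((hML2.const_mul 2).integrable_mul hY).mul_of_top_right hB).congr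
      (.of_forall fun ω => by simp only [Pi.mul_apply]; ring)
  have hM2Bi : Integrable (fun ω => M ω ^ 2 * B ω) P := hML2.integrable_sq.mul_of_top_left hB
  have hsplit : (fun ω => (B ω * (Y ω - M ω)) ^ 2)
      = fun ω => B ω * Y ω ^ 2 - 2 * M ω * (B ω * Y ω) + M ω ^ 2 * B ω := by
    ext ω; rcases hB01 ω with h | h <;> simp only [h] <;> ring
  have hadd : P[fun ω => B ω * Y ω ^ 2 - 2 * M ω * (B ω * Y ω) + M ω ^ 2 * B ω | m]
      =ᵐ[P] fun ω => P[fun ω => B ω * Y ω ^ 2 - 2 * M ω * (B ω * Y ω) | m] ω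
        + P[fun ω => M ω ^ 2 * B ω | m] ω :=
    condExp_add (hBY2i.sub hMBYi) hM2Bi m
  have hsub : P[fun ω => B ω * Y ω ^ 2 - 2 * M ω * (B ω * Y ω) | m]
      =ᵐ[P] fun ω => P[fun ω => B ω * Y ω ^ 2 | m] ω - P[fun ω => 2 * M ω * (B ω * Y ω) | m] ω :=
    condExp_sub hBY2i hMBYi m
  have hpull₁ : P[fun ω => 2 * M ω * (B ω * Y ω) | m]
      =ᵐ[P] fun ω => 2 * M ω * P[fun ω => B ω * Y ω | m] ω :=
    condExp_mul_of_stronglyMeasurable_left (hM.const_mul 2) hMBYi hBYi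
  have hpull₂ : P[fun ω => M ω ^ 2 * B ω | m] =ᵐ[P] fun ω => M ω ^ 2 * P[B | m] ω :=
    condExp_mul_of_stronglyMeasurable_left (hM.pow 2) hM2Bi (hB.integrable le_top)
  rw [hsplit]
  filter_upwards [hadd, hsub, hBY2, hpull₁, hBY, hpull₂, hBp] with ω h₀ h₁ h₂ h₃ h₄ h₅ h₆
  rw [h₀, h₁, h₂, h₃, h₄, h₅, h₆]
  ring

end Residual

section Decomposition

variable {Ω : Type*} {m mΩ : MeasurableSpace Ω} {P : Measure Ω}

theorem MeasureTheory.MemLp.sq_of_top {U : Ω → ℝ} (hU : MemLp U ∞ P) :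
    MemLp (fun ω => U ω ^ 2) ∞ P :=
  (hU.mul' hU).ae_eq (.of_forall fun ω => (sq (U ω)).symm)

theorem integrable_sq_mul_of_condExp_sq {U e S : Ω → ℝ} (hUb : MemLp U ∞ P)
    (heS : P[fun ω => e ω ^ 2 | m] =ᵐ[P] S) : Integrable (fun ω => U ω ^ 2 * S ω) P :=
  (integrable_condExp (f := fun ω => e ω ^ 2) (m := m) |>.mul_of_top_right hUb.sq_of_top).congr
    (heS.mono fun ω h => by simp only [Pi.mul_apply, h])

theorem integral_mul_sq_eq_of_condExp_sq [IsFiniteMeasure P] (hm : m ≤ mΩ) {U e S : Ω → ℝ}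
    (hU : StronglyMeasurable[m] U) (hUb : MemLp U ∞ P) (he : MemLp e 2 P)
    (heS : P[fun ω => e ω ^ 2 | m] =ᵐ[P] S) :
    ∫ ω, (U ω * e ω) ^ 2 ∂P = ∫ ω, U ω ^ 2 * S ω ∂P := by
  have hU2 := hUb.sq_of_top
  have hpull : ∀ᵐ ω ∂P, U ω ^ 2 * P[fun ω => e ω ^ 2 | m] ω = U ω ^ 2 * S ω :=
    heS.mono fun ω h => by rw [h]
  simp_rw [mul_pow]
  rw [integral_mul_eq_integral_mul_condExp (g := fun ω => U ω ^ 2) hm (hU.pow 2)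
    (he.integrable_sq.mul_of_top_right hU2) he.integrable_sq]
  exact integral_congr_ae hpull

theorem variance_mul_add_mul_add [IsProbabilityMeasure P] (hm : m ≤ mΩ)
    {U V e₁ e₀ S₁ S₀ H : Ω → ℝ}
    (hU : StronglyMeasurable[m] U) (hUb : MemLp U ∞ P)
    (hV : StronglyMeasurable[m] V) (hVb : MemLp V ∞ P)
    (he₁ : MemLp e₁ 2 P) (he₀ : MemLp e₀ 2 P) (he₁₀ : ∀ ω, e₁ ω * e₀ ω = 0)
    (he₁0 : P[e₁ | m] =ᵐ[P] 0) (he₀0 : P[e₀ | m] =ᵐ[P] 0)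
    (he₁S : P[fun ω => e₁ ω ^ 2 | m] =ᵐ[P] S₁) (he₀S : P[fun ω => e₀ ω ^ 2 | m] =ᵐ[P] S₀)
    (hH : MemLp H 2 P) (hHm : StronglyMeasurable[m] H) :
    Var[fun ω => U ω * e₁ ω + V ω * e₀ ω + H ω; P]
      = ∫ ω, (U ω ^ 2 * S₁ ω + V ω ^ 2 * S₀ ω) ∂P + Var[H; P] := by
  have hUe : MemLp (fun ω => U ω * e₁ ω) 2 P := he₁.mul' hUb
  have hVe : MemLp (fun ω => V ω * e₀ ω) 2 P := he₀.mul' hVb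
  have hR0 : P[fun ω => U ω * e₁ ω + V ω * e₀ ω | m] =ᵐ[P] 0 := by
    have hadd : P[fun ω => U ω * e₁ ω + V ω * e₀ ω | m]
        =ᵐ[P] fun ω => P[fun ω => U ω * e₁ ω | m] ω + P[fun ω => V ω * e₀ ω | m] ω :=
      condExp_add (hUe.integrable one_le_two) (hVe.integrable one_le_two) m
    filter_upwards [hadd,
      condExp_mul_eq_zero hU (hUe.integrable one_le_two) (he₁.integrable one_le_two) he₁0,
      condExp_mul_eq_zero hV (hVe.integrable one_le_two) (he₀.integrable one_le_two) he₀0]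
      with ω h h₁ h₀
    simp [h, h₁, h₀]
  have hsq : ∀ ω, (U ω * e₁ ω + V ω * e₀ ω) ^ 2 = (U ω * e₁ ω) ^ 2 + (V ω * e₀ ω) ^ 2 := by
    intro ω
    linear_combination 2 * U ω * V ω * he₁₀ ω
  rw [variance_add_of_condExp_eq_zero (R := fun ω => U ω * e₁ ω + V ω * e₀ ω) hm
      (hUe.add hVe) hH hHm hR0, integral_add (integrable_sq_mul_of_condExp_sq hUb he₁S)
      (integrable_sq_mul_of_condExp_sq hVb he₀S),
    ← integral_mul_sq_eq_of_condExp_sq hm hU hUb he₁ he₁S,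
    ← integral_mul_sq_eq_of_condExp_sq hm hV hVb he₀ he₀S,
    ← integral_add hUe.integrable_sq hVe.integrable_sq, integral_congr_ae (.of_forall hsq)]

end Decomposition

/-- The conditional variance, given `X`, of `ψ(D) - (D μ₁ + (1 - D) μ₀)(X)` at a point where
`σ₁², σ₀², π₁, D` take the values `s₁, s₀, p, d`. -/
noncomputable def aipwCondVar (s₁ s₀ p d : ℝ) : ℝ :=
  s₁ * d ^ 2 / p + s₀ * (1 - d) ^ 2 / (1 - p)

/-- `D_ad` at a point where `τ = μ₁ - μ₀` and `π₁` take the values `τ` and `p`. -/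
noncomputable def adaptiveWeight (τ p : ℝ) : ℝ :=
  (if 0 < τ then 1 else 0) + p * (if τ = 0 then 1 else 0)

section Pointwise

variable {a b c d p s τ : ℝ}

theorem norm_div_le_inv (hc : 0 < c) (hd : d ∈ Set.Icc (0 : ℝ) 1) (hp : c ≤ p) :
    ‖d / p‖ ≤ c⁻¹ := by
  rw [Real.norm_eq_abs, abs_div, abs_of_nonneg hd.1, abs_of_pos (hc.trans_le hp), ← one_div]
  exact div_le_div₀ zero_le_one hd.2 hc hp

theorem sq_div_mul_add_sq_div_mul {s₁ s₀ : ℝ} (hp : p ≠ 0) (hq : 1 - p ≠ 0) :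
    (d / p) ^ 2 * (s₁ * p) + ((1 - d) / (1 - p)) ^ 2 * (s₀ * (1 - p)) = aipwCondVar s₁ s₀ p d := by
  simp only [aipwCondVar]
  field_simp

theorem mix_le_max (hd : d ∈ Set.Icc (0 : ℝ) 1) : d * a + (1 - d) * b ≤ max a b := by
  nlinarith [le_max_left a b, le_max_right a b, hd.1, hd.2]

theorem adaptiveWeight_mix_eq_max (p : ℝ) :
    adaptiveWeight (a - b) p * a + (1 - adaptiveWeight (a - b) p) * b = max a b := by
  rcases lt_trichotomy (a - b) 0 with h | h | h
  · simp [adaptiveWeight, h.not_gt, h.ne, max_eq_right (sub_neg.1 h).le]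
  · simp [adaptiveWeight, sub_eq_zero.1 h]; ring
  · simp [adaptiveWeight, h, h.ne', max_eq_left (sub_pos.1 h).le]

theorem adaptiveWeight_mem_Icc (hp : p ∈ Set.Icc (0 : ℝ) 1) :
    adaptiveWeight τ p ∈ Set.Icc (0 : ℝ) 1 := by
  rcases lt_trichotomy τ 0 with h | h | h
  · simp [adaptiveWeight, h.not_gt, h.ne]
  · simpa [adaptiveWeight, h] using hp
  · simp [adaptiveWeight, h, h.ne']

theorem aipwCondVar_self_le (hs : 0 ≤ s) (hp₀ : 0 < p) (hp₁ : p < 1) (d : ℝ) :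
    aipwCondVar s s p p ≤ aipwCondVar s s p d := by
  have hq : 0 < 1 - p := sub_pos.2 hp₁
  have key : aipwCondVar s s p d = aipwCondVar s s p p + s * (d - p) ^ 2 / (p * (1 - p)) := by
    simp only [aipwCondVar]; field_simp; ring
  rw [key]
  have : 0 ≤ s * (d - p) ^ 2 / (p * (1 - p)) := by positivity
  linarith

theorem aipwCondVar_adaptiveWeight_le (hs : 0 ≤ s) (hp₀ : 0 < p) (hp₁ : p < 1)
    (h : d * a + (1 - d) * b = max a b) :
    aipwCondVar s s p (adaptiveWeight (a - b) p) ≤ aipwCondVar s s p d := by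
  rcases lt_trichotomy (a - b) 0 with hab | hab | hab
  · rw [max_eq_right (sub_neg.1 hab).le] at h
    have hd : d = 0 := by
      have : d * (a - b) = 0 := by linarith
      simpa [hab.ne] using this
    simp [adaptiveWeight, hab.not_gt, hab.ne, hd]
  · simpa [adaptiveWeight, hab] using aipwCondVar_self_le hs hp₀ hp₁ d
  · rw [max_eq_left (sub_pos.1 hab).le] at h
    have hd : d = 1 := by
      have : (1 - d) * (a - b) = 0 := by linarith
      have := (mul_eq_zero.1 this).resolve_right hab.ne'
      linarith
    simp [adaptiveWeight, hab, hab.ne', hd]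

theorem aipwCondVar_adaptiveWeight (hp₀ : 0 < p) (hp₁ : p < 1) :
    aipwCondVar s s p (adaptiveWeight τ p)
      = s * ((if 0 < τ then 1 else 0) / p + (if τ < 0 then 1 else 0) / (1 - p))
        + s * (if τ = 0 then 1 else 0) := by
  have hq : 1 - p ≠ 0 := (sub_pos.2 hp₁).ne'
  rcases lt_trichotomy τ 0 with h | h | h
  · simp [aipwCondVar, adaptiveWeight, h, h.ne, h.not_gt, div_eq_mul_inv]
  · simp only [aipwCondVar, adaptiveWeight, h, lt_irrefl, if_true, if_false]
    field_simp
    ring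
  · simp [aipwCondVar, adaptiveWeight, h, h.ne', h.not_gt, div_eq_mul_inv]

end Pointwise

theorem Measurable.adaptiveWeight {α : Type*} [MeasurableSpace α] {τ p : α → ℝ}
    (hτ : Measurable τ) (hp : Measurable p) : Measurable fun x => adaptiveWeight (τ x) (p x) :=
  (Measurable.ite (measurableSet_lt measurable_const hτ) measurable_const measurable_const).add
    (hp.mul (Measurable.ite (measurableSet_eq_fun hτ measurable_const) measurable_const
      measurable_const))

section Integrability

variable {Ω : Type*} [MeasurableSpace Ω] {P : Measure Ω}

theorem memLp_mix [IsFiniteMeasure P] {q : ℝ≥0∞} {d f g : Ω → ℝ}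
    (hd : AEStronglyMeasurable d P) (hdr : ∀ ω, d ω ∈ Set.Icc (0 : ℝ) 1) (hf : MemLp f q P)
    (hg : MemLp g q P) : MemLp (fun ω => d ω * f ω + (1 - d ω) * g ω) q P := by
  have hdb : MemLp d ∞ P := memLp_top_of_bound hd 1 (.of_forall fun ω => by
    rw [Real.norm_of_nonneg (hdr ω).1]; exact (hdr ω).2)
  exact (hf.mul' hdb).add (hg.mul' ((memLp_const 1).sub hdb))

theorem mix_ae_eq_max_of_integral_eq [IsFiniteMeasure P] {d a b : Ω → ℝ}
    (hd : AEStronglyMeasurable d P) (hdr : ∀ ω, d ω ∈ Set.Icc (0 : ℝ) 1)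
    (ha : Integrable a P) (hb : Integrable b P)
    (h : ∫ ω, (d ω * a ω + (1 - d ω) * b ω) ∂P = ∫ ω, max (a ω) (b ω) ∂P) :
    (fun ω => d ω * a ω + (1 - d ω) * b ω) =ᵐ[P] fun ω => max (a ω) (b ω) := by
  have hmix := memLp_mix hd hdr (memLp_one_iff_integrable.2 ha) (memLp_one_iff_integrable.2 hb)
  exact (integral_eq_iff_of_ae_le (memLp_one_iff_integrable.1 hmix) (ha.sup hb)
    (.of_forall fun ω => mix_le_max (hdr ω))).1 h

theorem memLp_top_div {c : ℝ} (hc : 0 < c) {d p : Ω → ℝ} (hd : AEMeasurable d P)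
    (hp : AEMeasurable p P) (hdr : ∀ ω, d ω ∈ Set.Icc (0 : ℝ) 1) (hpc : ∀ ω, c ≤ p ω) :
    MemLp (fun ω => d ω / p ω) ∞ P :=
  memLp_top_of_bound (hd.div hp).aestronglyMeasurable c⁻¹
    (.of_forall fun ω => norm_div_le_inv hc (hdr ω) (hpc ω))

theorem integrable_aipwCondVar {c : ℝ} (hc : 0 < c) {s₁ s₀ p d : Ω → ℝ}
    (hs₁ : Integrable s₁ P) (hs₀ : Integrable s₀ P) (hp : AEMeasurable p P)
    (hpr : ∀ ω, p ω ∈ Set.Icc c (1 - c)) (hd : AEMeasurable d P)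
    (hdr : ∀ ω, d ω ∈ Set.Icc (0 : ℝ) 1) :
    Integrable (fun ω => aipwCondVar (s₁ ω) (s₀ ω) (p ω) (d ω)) P := by
  have h₁ := memLp_top_div (d := fun ω => d ω ^ 2) hc (hd.pow_const 2) hp
    (fun ω => ⟨sq_nonneg _, pow_le_one₀ (hdr ω).1 (hdr ω).2⟩) (fun ω => (hpr ω).1)
  have h₀ := memLp_top_div (d := fun ω => (1 - d ω) ^ 2) (p := fun ω => 1 - p ω) hc
    ((aemeasurable_const.sub hd).pow_const 2)
    (aemeasurable_const.sub hp)
    (fun ω => ⟨sq_nonneg _, pow_le_one₀ (by linarith [(hdr ω).2]) (by linarith [(hdr ω).1])⟩)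
    (fun ω => by linarith [(hpr ω).2])
  refine ((hs₁.mul_of_top_left h₁).add (hs₀.mul_of_top_left h₀)).congr (.of_forall fun ω => ?_)
  simp [aipwCondVar, mul_div_assoc]

theorem integral_aipwCondVar_adaptiveWeight_le {s p a b d d' : Ω → ℝ}
    (hs : ∀ᵐ ω ∂P, 0 ≤ s ω) (hp : ∀ ω, p ω ∈ Set.Ioo (0 : ℝ) 1)
    (hd' : ∀ ω, d' ω = adaptiveWeight (a ω - b ω) (p ω))
    (hmax : (fun ω => d ω * a ω + (1 - d ω) * b ω) =ᵐ[P] fun ω => max (a ω) (b ω))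
    (hi' : Integrable (fun ω => aipwCondVar (s ω) (s ω) (p ω) (d' ω)) P)
    (hi : Integrable (fun ω => aipwCondVar (s ω) (s ω) (p ω) (d ω)) P) :
    ∫ ω, aipwCondVar (s ω) (s ω) (p ω) (d' ω) ∂P ≤ ∫ ω, aipwCondVar (s ω) (s ω) (p ω) (d ω) ∂P := by
  refine integral_mono_ae hi' hi ?_
  filter_upwards [hs, hmax] with ω hs h
  rw [hd' ω]
  exact aipwCondVar_adaptiveWeight_le hs (hp ω).1 (hp ω).2 h

theorem integral_aipwCondVar_of_eq_adaptiveWeight {s p τ d : Ω → ℝ} (hs : Integrable s P)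
    (hτ : Measurable τ) (hp : ∀ ω, p ω ∈ Set.Ioo (0 : ℝ) 1)
    (hd : ∀ ω, d ω = adaptiveWeight (τ ω) (p ω))
    (hint : Integrable (fun ω => aipwCondVar (s ω) (s ω) (p ω) (d ω)) P) :
    ∫ ω, aipwCondVar (s ω) (s ω) (p ω) (d ω) ∂P
      = ∫ ω, s ω * ((if 0 < τ ω then (1 : ℝ) else 0) / p ω
          + (if τ ω < 0 then (1 : ℝ) else 0) / (1 - p ω)) ∂P
        + ∫ ω, s ω * (if τ ω = 0 then (1 : ℝ) else 0) ∂P := by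
  have hsplit : ∀ ω, aipwCondVar (s ω) (s ω) (p ω) (d ω)
      = s ω * ((if 0 < τ ω then (1 : ℝ) else 0) / p ω
          + (if τ ω < 0 then (1 : ℝ) else 0) / (1 - p ω))
        + s ω * (if τ ω = 0 then (1 : ℝ) else 0) := fun ω => by
    rw [hd ω]; exact aipwCondVar_adaptiveWeight (hp ω).1 (hp ω).2
  have hf₀ : Integrable (fun ω => s ω * (if τ ω = 0 then (1 : ℝ) else 0)) P :=
    hs.mul_bdd (c := 1) (Measurable.ite (measurableSet_eq_fun hτ measurable_const)
      measurable_const measurable_const).aestronglyMeasurable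
      (.of_forall fun ω => by split_ifs <;> simp)
  rw [← integral_add ((hint.sub hf₀).congr (.of_forall fun ω => by simp [hsplit ω])) hf₀]
  exact integral_congr_ae (.of_forall hsplit)

end Integrability

theorem aipw_eq_add_residuals {Ω 𝒳 : Type*} (X : Ω → 𝒳) (A Y : Ω → ℝ) (D p m₁ m₀ : 𝒳 → ℝ) (ω : Ω)
    (hA : A ω = 0 ∨ A ω = 1) :
    aipw X A Y D p m₁ m₀ ω
      = D (X ω) / p (X ω) * (A ω * (Y ω - m₁ (X ω)))
        + (1 - D (X ω)) / (1 - p (X ω)) * ((1 - A ω) * (Y ω - m₀ (X ω)))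
        + (D (X ω) * m₁ (X ω) + (1 - D (X ω)) * m₀ (X ω)) := by
  rcases hA with h | h <;> simp [aipw, h] <;> ring

theorem variance_aipw {Ω 𝒳 : Type*} [MeasurableSpace Ω] [MeasurableSpace 𝒳]
    {P : Measure Ω} [IsProbabilityMeasure P] {X : Ω → 𝒳} {A Y : Ω → ℝ}
    (hX : Measurable X) (hA : Measurable A) (hAbin : ∀ ω, A ω = 0 ∨ A ω = 1)
    (hYL2 : MemLp Y 2 P) {c : ℝ} (hc : 0 < c) {π₁ : 𝒳 → ℝ} (hπ₁m : Measurable π₁)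
    (hπ₁r : ∀ x, π₁ x ∈ Set.Icc c (1 - c))
    (hcondA : P[A | MeasurableSpace.comap X inferInstance] =ᵐ[P] fun ω => π₁ (X ω))
    {μ₁ μ₀ : 𝒳 → ℝ} (hμ₁m : Measurable μ₁) (hμ₀m : Measurable μ₀)
    (hμ₁L2 : MemLp (fun ω => μ₁ (X ω)) 2 P) (hμ₀L2 : MemLp (fun ω => μ₀ (X ω)) 2 P)
    (hcond1 : P[fun ω => A ω * Y ω | MeasurableSpace.comap X inferInstance]
      =ᵐ[P] fun ω => μ₁ (X ω) * π₁ (X ω))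
    (hcond0 : P[fun ω => (1 - A ω) * Y ω | MeasurableSpace.comap X inferInstance]
      =ᵐ[P] fun ω => μ₀ (X ω) * (1 - π₁ (X ω)))
    {σ₁sq σ₀sq : 𝒳 → ℝ}
    (hcondsq1 : P[fun ω => A ω * Y ω ^ 2 | MeasurableSpace.comap X inferInstance]
      =ᵐ[P] fun ω => (μ₁ (X ω) ^ 2 + σ₁sq (X ω)) * π₁ (X ω))
    (hcondsq0 : P[fun ω => (1 - A ω) * Y ω ^ 2 | MeasurableSpace.comap X inferInstance]
      =ᵐ[P] fun ω => (μ₀ (X ω) ^ 2 + σ₀sq (X ω)) * (1 - π₁ (X ω)))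
    {D : 𝒳 → ℝ} (hDm : Measurable D) (hDr : ∀ x, D x ∈ Set.Icc (0 : ℝ) 1) :
    variance (aipw X A Y D π₁ μ₁ μ₀) P
      = ∫ ω, aipwCondVar (σ₁sq (X ω)) (σ₀sq (X ω)) (π₁ (X ω)) (D (X ω)) ∂P
        + variance (fun ω => D (X ω) * μ₁ (X ω) + (1 - D (X ω)) * μ₀ (X ω)) P := by
  have hXm : Measurable[MeasurableSpace.comap X inferInstance] X := comap_measurable X
  have h1A : ∀ ω, 1 - A ω = 0 ∨ 1 - A ω = 1 := fun ω => by
    rcases hAbin ω with h | h <;> simp [h]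
  have hAb : MemLp A ∞ P := memLp_top_of_bound hA.aestronglyMeasurable 1
    (.of_forall fun ω => by rcases hAbin ω with h | h <;> simp [h])
  have h1Ab : MemLp (fun ω => 1 - A ω) ∞ P := (memLp_const 1).sub hAb
  have h1D : ∀ x, 1 - D x ∈ Set.Icc (0 : ℝ) 1 := fun x =>
    ⟨by linarith [(hDr x).2], by linarith [(hDr x).1]⟩
  have h1π : ∀ x, c ≤ 1 - π₁ x := fun x => by linarith [(hπ₁r x).2]
  have hY := hYL2.integrable one_le_two
  have hμ₁X := (hμ₁m.comp hXm).stronglyMeasurable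
  have hμ₀X := (hμ₀m.comp hXm).stronglyMeasurable
  have hcond1A := condExp_one_sub hX.comap_le (hAb.integrable le_top) hcondA
  rw [show aipw X A Y D π₁ μ₁ μ₀ = _ from
      funext fun ω => aipw_eq_add_residuals X A Y D π₁ μ₁ μ₀ ω (hAbin ω),
    variance_mul_add_mul_add (U := fun ω => D (X ω) / π₁ (X ω))
      (V := fun ω => (1 - D (X ω)) / (1 - π₁ (X ω)))
      (H := fun ω => D (X ω) * μ₁ (X ω) + (1 - D (X ω)) * μ₀ (X ω))
      (e₁ := fun ω => A ω * (Y ω - μ₁ (X ω))) (e₀ := fun ω => (1 - A ω) * (Y ω - μ₀ (X ω)))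
      hX.comap_le
      ((hDm.div hπ₁m).comp hXm).stronglyMeasurable
      (memLp_top_div hc (hDm.comp hX).aemeasurable (hπ₁m.comp hX).aemeasurable
        (fun ω => hDr (X ω)) (fun ω => (hπ₁r (X ω)).1))
      (((measurable_const.sub hDm).div (measurable_const.sub hπ₁m)).comp hXm).stronglyMeasurable
      (memLp_top_div hc ((measurable_const.sub hDm).comp hX).aemeasurable
        ((measurable_const.sub hπ₁m).comp hX).aemeasurable (fun ω => h1D (X ω))
        (fun ω => h1π (X ω)))
      ((hYL2.sub hμ₁L2).mul' hAb) ((hYL2.sub hμ₀L2).mul' h1Ab)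
      (fun ω => by rcases hAbin ω with h | h <;> simp [h])
      (condExp_mul_sub_eq_zero hAb hY hμ₁X (hμ₁L2.integrable one_le_two) hcondA hcond1)
      (condExp_mul_sub_eq_zero h1Ab hY hμ₀X (hμ₀L2.integrable one_le_two) hcond1A hcond0)
      (condExp_mul_sub_sq hAb hAbin hYL2 hμ₁X hμ₁L2 hcondA hcond1 hcondsq1)
      (condExp_mul_sub_sq h1Ab h1A hYL2 hμ₀X hμ₀L2 hcond1A hcond0 hcondsq0)
      (memLp_mix (hDm.comp hX).aestronglyMeasurable (fun ω => hDr (X ω)) hμ₁L2 hμ₀L2)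
      (((hDm.mul hμ₁m).add ((measurable_const.sub hDm).mul hμ₀m)).comp hXm).stronglyMeasurable]
  congr 1
  exact integral_congr_ae (.of_forall fun ω =>
    sq_div_mul_add_sq_div_mul ((hc.trans_le (hπ₁r (X ω)).1).ne') (hc.trans_le (h1π (X ω))).ne')

theorem stmt_16_general {Ω 𝒳 : Type*} [MeasurableSpace Ω] [MeasurableSpace 𝒳]
    (P : Measure Ω) [IsProbabilityMeasure P]
    (X : Ω → 𝒳) (A Y : Ω → ℝ)
    (hX : Measurable X) (hA : Measurable A)
    (hAbin : ∀ ω, A ω = 0 ∨ A ω = 1) (hYL2 : MemLp Y 2 P)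
    (c : ℝ) (hc : c ∈ Set.Ioo (0 : ℝ) (1 / 2))
    (π₁ : 𝒳 → ℝ) (hπ₁m : Measurable π₁) (hπ₁r : ∀ x, π₁ x ∈ Set.Icc c (1 - c))
    (hcondA : P[A | MeasurableSpace.comap X inferInstance]
      =ᵐ[P] fun ω => π₁ (X ω))
    (μ₁ μ₀ : 𝒳 → ℝ) (hμ₁m : Measurable μ₁) (hμ₀m : Measurable μ₀)
    (hμ₁L2 : MemLp (fun ω => μ₁ (X ω)) 2 P) (hμ₀L2 : MemLp (fun ω => μ₀ (X ω)) 2 P)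
    (hcond1 : P[fun ω => A ω * Y ω | MeasurableSpace.comap X inferInstance]
      =ᵐ[P] fun ω => μ₁ (X ω) * π₁ (X ω))
    (hcond0 : P[fun ω => (1 - A ω) * Y ω | MeasurableSpace.comap X inferInstance]
      =ᵐ[P] fun ω => μ₀ (X ω) * (1 - π₁ (X ω)))
    (σ₁sq σ₀sq : 𝒳 → ℝ)
    (hσ₁nn : ∀ x, 0 ≤ σ₁sq x)
    (hσ₁L1 : Integrable (fun ω => σ₁sq (X ω)) P)
    (hcondsq1 : P[fun ω => A ω * Y ω ^ 2 | MeasurableSpace.comap X inferInstance]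
      =ᵐ[P] fun ω => (μ₁ (X ω) ^ 2 + σ₁sq (X ω)) * π₁ (X ω))
    (hcondsq0 : P[fun ω => (1 - A ω) * Y ω ^ 2 | MeasurableSpace.comap X inferInstance]
      =ᵐ[P] fun ω => (μ₀ (X ω) ^ 2 + σ₀sq (X ω)) * (1 - π₁ (X ω)))
    (σsq : 𝒳 → ℝ)
    (hhomo1 : (fun x => σ₁sq x) =ᵐ[Measure.map X P] σsq)
    (hhomo0 : (fun x => σ₀sq x) =ᵐ[Measure.map X P] σsq)
    (Dad : 𝒳 → ℝ)
    (hDad : ∀ x, Dad x = (if 0 < μ₁ x - μ₀ x then (1 : ℝ) else 0)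
      + π₁ x * (if μ₁ x - μ₀ x = 0 then (1 : ℝ) else 0))
    (d₀ : 𝒳 → ℝ) (hd₀ : ∀ x, d₀ x = if 0 < μ₁ x - μ₀ x then (1 : ℝ) else 0)
    (V₀ : ℝ) (hV₀ : V₀ = ∫ ω, max (μ₁ (X ω)) (μ₀ (X ω)) ∂P) :
    (∀ D : 𝒳 → ℝ, Measurable D → (∀ x, D x ∈ Set.Icc (0 : ℝ) 1) →
      (∫ ω, (D (X ω) * μ₁ (X ω) + (1 - D (X ω)) * μ₀ (X ω)) ∂P) = V₀ →
      variance (aipw X A Y Dad π₁ μ₁ μ₀) P ≤ variance (aipw X A Y D π₁ μ₁ μ₀) P) ∧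
    (∫ ω, (Dad (X ω) * μ₁ (X ω) + (1 - Dad (X ω)) * μ₀ (X ω)) ∂P) = V₀ ∧
    variance (aipw X A Y Dad π₁ μ₁ μ₀) P
      = variance (fun ω => d₀ (X ω) * μ₁ (X ω) + (1 - d₀ (X ω)) * μ₀ (X ω)) P
        + ∫ ω, σsq (X ω) * ((if 0 < μ₁ (X ω) - μ₀ (X ω) then (1 : ℝ) else 0) / π₁ (X ω)
            + (if μ₁ (X ω) - μ₀ (X ω) < 0 then (1 : ℝ) else 0) / (1 - π₁ (X ω))) ∂P
        + ∫ ω, σsq (X ω) * (if μ₁ (X ω) - μ₀ (X ω) = 0 then (1 : ℝ) else 0) ∂P := by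
  have hπ : ∀ x, π₁ x ∈ Set.Ioo (0 : ℝ) 1 := fun x =>
    ⟨hc.1.trans_le (hπ₁r x).1, by linarith [(hπ₁r x).2, hc.1]⟩
  have hσ₁ : ∀ᵐ ω ∂P, σ₁sq (X ω) = σsq (X ω) := ae_of_ae_map hX.aemeasurable hhomo1
  have hσ₀ : ∀ᵐ ω ∂P, σ₀sq (X ω) = σsq (X ω) := ae_of_ae_map hX.aemeasurable hhomo0
  have hσL1 : Integrable (fun ω => σsq (X ω)) P := hσ₁L1.congr hσ₁
  have hσnn : ∀ᵐ ω ∂P, 0 ≤ σsq (X ω) := hσ₁.mono fun ω h => h ▸ hσ₁nn (X ω)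
  have hvar : ∀ D : 𝒳 → ℝ, Measurable D → (∀ x, D x ∈ Set.Icc (0 : ℝ) 1) →
      variance (aipw X A Y D π₁ μ₁ μ₀) P
        = ∫ ω, aipwCondVar (σsq (X ω)) (σsq (X ω)) (π₁ (X ω)) (D (X ω)) ∂P
          + variance (fun ω => D (X ω) * μ₁ (X ω) + (1 - D (X ω)) * μ₀ (X ω)) P := by
    intro D hDm hDr
    rw [variance_aipw hX hA hAbin hYL2 hc.1 hπ₁m hπ₁r hcondA hμ₁m hμ₀m hμ₁L2 hμ₀L2 hcond1
      hcond0 hcondsq1 hcondsq0 hDm hDr]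
    congr 1
    exact integral_congr_ae (by filter_upwards [hσ₁, hσ₀] with ω h₁ h₀; rw [h₁, h₀])
  have hCV : ∀ D : 𝒳 → ℝ, Measurable D → (∀ x, D x ∈ Set.Icc (0 : ℝ) 1) →
      Integrable (fun ω => aipwCondVar (σsq (X ω)) (σsq (X ω)) (π₁ (X ω)) (D (X ω))) P :=
    fun D hDm hDr => integrable_aipwCondVar hc.1 hσL1 hσL1 (hπ₁m.comp hX).aemeasurable
      (fun ω => hπ₁r (X ω)) (hDm.comp hX).aemeasurable (fun ω => hDr (X ω))
  have hDadm : Measurable Dad := (funext hDad : Dad = _) ▸ (hμ₁m.sub hμ₀m).adaptiveWeight hπ₁m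
  have hDadr : ∀ x, Dad x ∈ Set.Icc (0 : ℝ) 1 := fun x =>
    hDad x ▸ adaptiveWeight_mem_Icc (Set.Ioo_subset_Icc_self (hπ x))
  have hDad_max : ∀ x, Dad x * μ₁ x + (1 - Dad x) * μ₀ x = max (μ₁ x) (μ₀ x) := fun x =>
    hDad x ▸ adaptiveWeight_mix_eq_max (π₁ x)
  refine ⟨fun D hDm hDr hVD => ?_, hV₀ ▸ integral_congr_ae (.of_forall fun ω => hDad_max (X ω)), ?_⟩
  · have hmax := mix_ae_eq_max_of_integral_eq (d := fun ω => D (X ω))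
      (hDm.comp hX).aestronglyMeasurable (fun ω => hDr (X ω)) (hμ₁L2.integrable one_le_two)
      (hμ₀L2.integrable one_le_two) (hVD.trans hV₀)
    rw [hvar Dad hDadm hDadr, hvar D hDm hDr,
      variance_congr (hmax.trans (.of_forall fun ω => (hDad_max (X ω)).symm))]
    exact add_le_add_left (integral_aipwCondVar_adaptiveWeight_le hσnn (fun ω => hπ (X ω))
      (fun ω => hDad (X ω)) hmax (hCV Dad hDadm hDadr) (hCV D hDm hDr)) _
  · have hd₀_max : ∀ x, d₀ x * μ₁ x + (1 - d₀ x) * μ₀ x = max (μ₁ x) (μ₀ x) := fun x => by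
      simpa [adaptiveWeight, hd₀ x] using adaptiveWeight_mix_eq_max (a := μ₁ x) (b := μ₀ x) 0
    rw [hvar Dad hDadm hDadr, integral_aipwCondVar_of_eq_adaptiveWeight
      (τ := fun ω => μ₁ (X ω) - μ₀ (X ω)) hσL1 ((hμ₁m.sub hμ₀m).comp hX) (fun ω => hπ (X ω))
      (fun ω => hDad (X ω)) (hCV Dad hDadm hDadr),
      variance_congr (.of_forall fun ω => (hDad_max (X ω)).trans (hd₀_max (X ω)).symm)]
    ring

/-- Efficiency optimality of the adaptive-smoothing influence function
among unbiased AIPW scores: under homoscedasticity, for every measurable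
`D : 𝒳 → [0,1]` with `V(D) = V₀`, `Var(ψ(D,π₁,(μ₁,μ₀))) ≥ Var(ψ(D_ad,π₁,(μ₁,μ₀)))`,
where `D_ad = 1{τ>0} + π₁·1{τ=0}` (`τ = μ₁ − μ₀`). Hence the infimum of the variance
over all such `D` equals
`Var(d₀(X)μ₁(X)+(1−d₀(X))μ₀(X)) + E[σ²(X)(1{τ(X)>0}/π₁(X) + 1{τ(X)<0}/(1−π₁(X)))]
 + E[σ²(X)·1{τ(X)=0}]` and is attained at `D = D_ad` (which satisfies `V(D_ad) = V₀`). -/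
theorem stmt_16 {Ω 𝒳 : Type*} [MeasurableSpace Ω] [MeasurableSpace 𝒳]
    (P : Measure Ω) [IsProbabilityMeasure P]
    (X : Ω → 𝒳) (A Y : Ω → ℝ)
    (hX : Measurable X) (hA : Measurable A) (hY : Measurable Y)
    (hAbin : ∀ ω, A ω = 0 ∨ A ω = 1) (hYL2 : MemLp Y 2 P)
    (c : ℝ) (hc : c ∈ Set.Ioo (0 : ℝ) (1 / 2))
    (π₁ : 𝒳 → ℝ) (hπ₁m : Measurable π₁) (hπ₁r : ∀ x, π₁ x ∈ Set.Icc c (1 - c))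
    (hcondA : P[A | MeasurableSpace.comap X inferInstance]
      =ᵐ[P] fun ω => π₁ (X ω))
    (μ₁ μ₀ : 𝒳 → ℝ) (hμ₁m : Measurable μ₁) (hμ₀m : Measurable μ₀)
    (hμ₁L2 : MemLp (fun ω => μ₁ (X ω)) 2 P) (hμ₀L2 : MemLp (fun ω => μ₀ (X ω)) 2 P)
    (hcond1 : P[fun ω => A ω * Y ω | MeasurableSpace.comap X inferInstance]
      =ᵐ[P] fun ω => μ₁ (X ω) * π₁ (X ω))
    (hcond0 : P[fun ω => (1 - A ω) * Y ω | MeasurableSpace.comap X inferInstance]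
      =ᵐ[P] fun ω => μ₀ (X ω) * (1 - π₁ (X ω)))
    (σ₁sq σ₀sq : 𝒳 → ℝ) (hσ₁m : Measurable σ₁sq) (hσ₀m : Measurable σ₀sq)
    (hσ₁nn : ∀ x, 0 ≤ σ₁sq x) (hσ₀nn : ∀ x, 0 ≤ σ₀sq x)
    (hσ₁L1 : Integrable (fun ω => σ₁sq (X ω)) P)
    (hσ₀L1 : Integrable (fun ω => σ₀sq (X ω)) P)
    (hcondsq1 : P[fun ω => A ω * Y ω ^ 2 | MeasurableSpace.comap X inferInstance]
      =ᵐ[P] fun ω => (μ₁ (X ω) ^ 2 + σ₁sq (X ω)) * π₁ (X ω))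
    (hcondsq0 : P[fun ω => (1 - A ω) * Y ω ^ 2 | MeasurableSpace.comap X inferInstance]
      =ᵐ[P] fun ω => (μ₀ (X ω) ^ 2 + σ₀sq (X ω)) * (1 - π₁ (X ω)))
    (σsq : 𝒳 → ℝ) (hσm : Measurable σsq)
    (hhomo1 : (fun x => σ₁sq x) =ᵐ[Measure.map X P] σsq)
    (hhomo0 : (fun x => σ₀sq x) =ᵐ[Measure.map X P] σsq)
    (Dad : 𝒳 → ℝ)
    (hDad : ∀ x, Dad x = (if 0 < μ₁ x - μ₀ x then (1 : ℝ) else 0)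
      + π₁ x * (if μ₁ x - μ₀ x = 0 then (1 : ℝ) else 0))
    (d₀ : 𝒳 → ℝ) (hd₀ : ∀ x, d₀ x = if 0 < μ₁ x - μ₀ x then (1 : ℝ) else 0)
    (V₀ : ℝ) (hV₀ : V₀ = ∫ ω, max (μ₁ (X ω)) (μ₀ (X ω)) ∂P) :
    (∀ D : 𝒳 → ℝ, Measurable D → (∀ x, D x ∈ Set.Icc (0 : ℝ) 1) →
      (∫ ω, (D (X ω) * μ₁ (X ω) + (1 - D (X ω)) * μ₀ (X ω)) ∂P) = V₀ →
      variance (aipw X A Y Dad π₁ μ₁ μ₀) P ≤ variance (aipw X A Y D π₁ μ₁ μ₀) P) ∧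
    (∫ ω, (Dad (X ω) * μ₁ (X ω) + (1 - Dad (X ω)) * μ₀ (X ω)) ∂P) = V₀ ∧
    variance (aipw X A Y Dad π₁ μ₁ μ₀) P
      = variance (fun ω => d₀ (X ω) * μ₁ (X ω) + (1 - d₀ (X ω)) * μ₀ (X ω)) P
        + ∫ ω, σsq (X ω) * ((if 0 < μ₁ (X ω) - μ₀ (X ω) then (1 : ℝ) else 0) / π₁ (X ω)
            + (if μ₁ (X ω) - μ₀ (X ω) < 0 then (1 : ℝ) else 0) / (1 - π₁ (X ω))) ∂P
        + ∫ ω, σsq (X ω) * (if μ₁ (X ω) - μ₀ (X ω) = 0 then (1 : ℝ) else 0) ∂P :=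
  stmt_16_general P X A Y hX hA hAbin hYL2 c hc π₁ hπ₁m hπ₁r hcondA μ₁ μ₀ hμ₁m hμ₀m hμ₁L2 hμ₀L2
    hcond1 hcond0 σ₁sq σ₀sq hσ₁nn hσ₁L1 hcondsq1 hcondsq0 σsq hhomo1 hhomo0 Dad hDad d₀ hd₀ V₀ hV₀
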